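/- Let K be algebraically closed, I = (f_1, …, f_r) ⊴ K[x], and suppose the identity matrix 1_n lies in V(I). Suppose for each 1 ≤ i ≤ r that g_i ∈ K[x, y] and l_i ∈ ℕ satisfy det(w)^{l_i} · f_i(v·w⁻¹) = g_i(v, w) for all v ∈ K^{n×n} and all w ∈ GL(n, K) (this expresses g_i as f_i evaluated at x·N(y), cleared of denominators). Then V*(I) is a group under matrix multiplication if and only if g_i ∈ √(Î_xy) for every 1 ≤ i ≤ r, where g_i is regarded as an element of K[x̂, ŷ]. -/

import Mathlib

open MvPolynomial

/-- Evaluation of a polynomial in the `n²` indeterminates at an `n × n` matrix. -/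
noncomputable def matEval {n : ℕ} {K : Type*} [Field K] (v : Matrix (Fin n) (Fin n) K) :
    MvPolynomial (Fin n × Fin n) K →+* K :=
  MvPolynomial.eval (fun p => v p.1 p.2)

/-- `V(I)`: the matrices annihilating every polynomial of `I`. -/
def Vset {n : ℕ} {K : Type*} [Field K] (I : Ideal (MvPolynomial (Fin n × Fin n) K)) :
    Set (Matrix (Fin n) (Fin n) K) :=
  {v | ∀ f ∈ I, matEval v f = 0}

/-- `V*(I) = V(I) ∩ GL(n,K)`: the invertible matrices in `V(I)`. -/
def Vstar {n : ℕ} {K : Type*} [Field K] (I : Ideal (MvPolynomial (Fin n × Fin n) K)) :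
    Set (Matrix (Fin n) (Fin n) K) :=
  {v | v ∈ Vset I ∧ IsUnit v}

/-- `det(x)`, the determinant of the matrix of indeterminates. -/
noncomputable def detPoly (n : ℕ) (K : Type*) [Field K] : MvPolynomial (Fin n × Fin n) K :=
  (Matrix.of fun i j => MvPolynomial.X (i, j)).det

/-- `f₀ = x₀ · det(x) − 1 ∈ K[x̂]`, where `x₀` is the extra indeterminate `none`. -/
noncomputable def fzero (n : ℕ) (K : Type*) [Field K] :
    MvPolynomial (Option (Fin n × Fin n)) K :=
  MvPolynomial.X none * MvPolynomial.rename some (detPoly n K) - 1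

/-- `Î = I·K[x̂] + (f₀)`. -/
noncomputable def Ihat {n : ℕ} {K : Type*} [Field K]
    (I : Ideal (MvPolynomial (Fin n × Fin n) K)) :
    Ideal (MvPolynomial (Option (Fin n × Fin n)) K) :=
  Ideal.map (MvPolynomial.rename (some : Fin n × Fin n → Option (Fin n × Fin n))) I
    ⊔ Ideal.span {fzero n K}

/-- Evaluation of a polynomial in `K[x̂]` at a pair `(v₀, v) ∈ K ⊕ K^{n×n}`. -/
noncomputable def hatEval {n : ℕ} {K : Type*} [Field K] (v₀ : K)
    (v : Matrix (Fin n) (Fin n) K) :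
    MvPolynomial (Option (Fin n × Fin n)) K →+* K :=
  MvPolynomial.eval (fun o : Option (Fin n × Fin n) => o.elim v₀ (fun p => v p.1 p.2))

/-- `V(Ĵ) ⊆ K ⊕ K^{n×n}` for an ideal `Ĵ ⊴ K[x̂]`. -/
def VhatSet {n : ℕ} {K : Type*} [Field K]
    (J : Ideal (MvPolynomial (Option (Fin n × Fin n)) K)) :
    Set (K × Matrix (Fin n) (Fin n) K) :=
  {p | ∀ f ∈ J, hatEval p.1 p.2 f = 0}

/-- `Î_xy = Î·K[x̂,ŷ] + φ(Î)·K[x̂,ŷ] ⊴ K[x̂,ŷ]`, where the left summand of the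
variable type is `x̂` and the right one is `ŷ`. -/
noncomputable def Ihatxy {n : ℕ} {K : Type*} [Field K]
    (I : Ideal (MvPolynomial (Fin n × Fin n) K)) :
    Ideal (MvPolynomial (Option (Fin n × Fin n) ⊕ Option (Fin n × Fin n)) K) :=
  Ideal.map (MvPolynomial.rename
      (Sum.inl : Option (Fin n × Fin n) → Option (Fin n × Fin n) ⊕ Option (Fin n × Fin n)))
      (Ihat I)
    ⊔ Ideal.map (MvPolynomial.rename
      (Sum.inr : Option (Fin n × Fin n) → Option (Fin n × Fin n) ⊕ Option (Fin n × Fin n)))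
      (Ihat I)


/-- Evaluation of a polynomial in `K[x,y]` at a pair of matrices `(v, w)`. -/
noncomputable def matEval2 {n : ℕ} {K : Type*} [Field K]
    (v w : Matrix (Fin n) (Fin n) K) :
    MvPolynomial ((Fin n × Fin n) ⊕ (Fin n × Fin n)) K →+* K :=
  MvPolynomial.eval (Sum.elim (fun p => v p.1 p.2) (fun p => w p.1 p.2))

/-!
By the Nullstellensatz, a polynomial lies in `√(Î_xy)` iff it vanishes on `V(Î_xy)`, whose
points are exactly the pairs `((det v)⁻¹, v, (det w)⁻¹, w)` with `v, w ∈ V*(I)`. At such a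
point `gᵢ` takes the value `det(w)^{lᵢ} fᵢ(v w⁻¹)` with `det w ≠ 0`, so the radical condition
says that `v w⁻¹ ∈ V(I)` for all `v, w ∈ V*(I)`. As `1ₙ ∈ V*(I)`, this closure under
`(v, w) ↦ v w⁻¹` is the subgroup criterion.
-/

theorem exists_subgroup_coe_eq_iff {G : Type*} [Group G] {s : Set G} (hs : s.Nonempty) :
    (∃ H : Subgroup G, (H : Set G) = s) ↔ ∀ x ∈ s, ∀ y ∈ s, x * y⁻¹ ∈ s := by
  constructor
  · rintro ⟨H, rfl⟩ x hx y hy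
    exact H.mul_mem hx (H.inv_mem hy)
  · intro hdiv
    exact ⟨Subgroup.ofDiv s hs hdiv, rfl⟩

theorem exists_subgroup_image_eq_units_iff {ι R : Type*} [Fintype ι] [DecidableEq ι]
    [CommRing R] {T : Set (Matrix ι ι R)} (hone : (1 : Matrix ι ι R) ∈ T) :
    (∃ G : Subgroup (GL ι R),
        (fun x : GL ι R => (x : Matrix ι ι R)) '' ↑G = {v | v ∈ T ∧ IsUnit v}) ↔
      ∀ v ∈ T, IsUnit v → ∀ w ∈ T, IsUnit w → v * w⁻¹ ∈ T := by
  set s : Set (GL ι R) := {u | (u : Matrix ι ι R) ∈ T}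
  have himage : {v | v ∈ T ∧ IsUnit v} = (fun x : GL ι R => (x : Matrix ι ι R)) '' s := by
    ext v
    constructor
    · rintro ⟨hv, hvu⟩
      exact ⟨hvu.unit, hv, hvu.unit_spec⟩
    · rintro ⟨u, hu, rfl⟩
      exact ⟨hu, u.isUnit⟩
  simp_rw [himage, (Set.image_injective.mpr Units.val_injective).eq_iff]
  rw [exists_subgroup_coe_eq_iff (s := s) ⟨1, hone⟩]
  constructor
  · intro hdiv v hv hvu w hw hwu
    simpa [s, Matrix.coe_units_inv] using hdiv hvu.unit hv hwu.unit hw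
  · intro hdiv x hx y hy
    change ((x * y⁻¹ : GL ι R) : Matrix ι ι R) ∈ T
    rw [Units.val_mul, Matrix.coe_units_inv]
    exact hdiv _ hx x.isUnit _ hy y.isUnit

section Nullstellensatz

variable {n : ℕ} {K : Type*} [Field K]

theorem mem_Vset_span_iff (v : Matrix (Fin n) (Fin n) K)
    (S : Set (MvPolynomial (Fin n × Fin n) K)) :
    v ∈ Vset (Ideal.span S) ↔ ∀ f ∈ S, matEval v f = 0 := by
  constructor
  · exact fun h f hf => h f (Ideal.subset_span hf)
  · intro h f hf
    exact (Ideal.span_le (I := RingHom.ker (matEval v))).mpr h hf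

theorem matEval_detPoly (v : Matrix (Fin n) (Fin n) K) :
    matEval v (detPoly n K) = v.det := by
  rw [matEval, detPoly, RingHom.map_det]
  congr 1
  ext i j
  simp

theorem eval_fzero (x : Option (Fin n × Fin n) → K) :
    eval x (fzero n K) = x none * (Matrix.of fun i j => x (some (i, j))).det - 1 := by
  have hdet : eval x (rename some (detPoly n K)) = (Matrix.of fun i j => x (some (i, j))).det := by
    rw [eval_rename]
    exact matEval_detPoly (Matrix.of fun i j => x (some (i, j)))
  simp [fzero, hdet]

theorem comap_rename_ker_eval {σ τ : Type*} (φ : σ → τ) (x : τ → K) :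
    Ideal.comap (rename φ : MvPolynomial σ K →ₐ[K] MvPolynomial τ K) (RingHom.ker (eval x))
      = RingHom.ker (eval (x ∘ φ)) := by
  ext q
  simp [Ideal.mem_comap, RingHom.mem_ker, eval_rename]

/-- For invertible `v`, the unique point of `V(f₀)` lying over `v`. -/
noncomputable def hatPoint (v : Matrix (Fin n) (Fin n) K) : Option (Fin n × Fin n) → K :=
  fun o => o.elim v.det⁻¹ fun p => v p.1 p.2

theorem Ihat_le_ker_eval_iff (I : Ideal (MvPolynomial (Fin n × Fin n) K))
    (x : Option (Fin n × Fin n) → K) :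
    Ihat I ≤ RingHom.ker (eval x) ↔ ∃ v ∈ Vstar I, x = hatPoint v := by
  rw [Ihat, sup_le_iff, Ideal.map_le_iff_le_comap, comap_rename_ker_eval, Ideal.span_le,
    Set.singleton_subset_iff, SetLike.mem_coe, RingHom.mem_ker, eval_fzero, sub_eq_zero]
  constructor
  · rintro ⟨hI, hdet⟩
    set M : Matrix (Fin n) (Fin n) K := Matrix.of fun i j => x (some (i, j))
    have hM : IsUnit M := (Matrix.isUnit_iff_isUnit_det M).mpr (.of_mul_eq_one_right _ hdet)
    refine ⟨M, ⟨fun f hf => hI hf, hM⟩, ?_⟩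
    funext o
    cases o with
    | none => exact eq_inv_of_mul_eq_one_left hdet
    | some p => rfl
  · rintro ⟨v, ⟨hv, hvu⟩, rfl⟩
    exact ⟨fun f hf => hv f hf,
      inv_mul_cancel₀ ((Matrix.isUnit_iff_isUnit_det v).mp hvu).ne_zero⟩

theorem mem_zeroLocus_Ihatxy_iff (I : Ideal (MvPolynomial (Fin n × Fin n) K))
    (p : Option (Fin n × Fin n) ⊕ Option (Fin n × Fin n) → K) :
    p ∈ zeroLocus K (Ihatxy I) ↔
      ∃ v ∈ Vstar I, ∃ w ∈ Vstar I, p = Sum.elim (hatPoint v) (hatPoint w) := by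
  have hker : p ∈ zeroLocus K (Ihatxy I) ↔ Ihatxy I ≤ RingHom.ker (eval p) :=
    ⟨fun h q hq => h q hq, fun h q hq => h hq⟩
  rw [hker, Ihatxy, sup_le_iff, Ideal.map_le_iff_le_comap, Ideal.map_le_iff_le_comap,
    comap_rename_ker_eval, comap_rename_ker_eval, Ihat_le_ker_eval_iff, Ihat_le_ker_eval_iff]
  constructor
  · rintro ⟨⟨v, hv, hpv⟩, ⟨w, hw, hpw⟩⟩
    exact ⟨v, hv, w, hw, by rw [← hpv, ← hpw, Sum.elim_comp_inl_inr]⟩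
  · rintro ⟨v, hv, w, hw, rfl⟩
    exact ⟨⟨v, hv, rfl⟩, ⟨w, hw, rfl⟩⟩

theorem eval_hatPoint_rename (v w : Matrix (Fin n) (Fin n) K)
    (h : MvPolynomial ((Fin n × Fin n) ⊕ (Fin n × Fin n)) K) :
    eval (Sum.elim (hatPoint v) (hatPoint w)) (rename (Sum.map some some) h)
      = matEval2 v w h := by
  rw [eval_rename, Sum.elim_comp_map]
  rfl

theorem rename_mem_radical_Ihatxy_iff [IsAlgClosed K]
    (I : Ideal (MvPolynomial (Fin n × Fin n) K))
    (h : MvPolynomial ((Fin n × Fin n) ⊕ (Fin n × Fin n)) K) :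
    rename (Sum.map some some) h ∈ (Ihatxy I).radical ↔
      ∀ v ∈ Vstar I, ∀ w ∈ Vstar I, matEval2 v w h = 0 := by
  rw [← vanishingIdeal_zeroLocus_eq_radical (K := K), mem_vanishingIdeal_iff]
  simp only [mem_zeroLocus_Ihatxy_iff]
  constructor
  · intro H v hv w hw
    exact (eval_hatPoint_rename v w h).symm.trans (H _ ⟨v, hv, w, hw, rfl⟩)
  · rintro H _ ⟨v, hv, w, hw, rfl⟩
    exact (eval_hatPoint_rename v w h).trans (H v hv w hw)

end Nullstellensatz

theorem stmt13_general {n : ℕ} {K : Type*} [Field K] [IsAlgClosed K]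
    (r : ℕ) (f : Fin r → MvPolynomial (Fin n × Fin n) K)
    (g : Fin r → MvPolynomial ((Fin n × Fin n) ⊕ (Fin n × Fin n)) K) (l : Fin r → ℕ)
    (I : Ideal (MvPolynomial (Fin n × Fin n) K)) (hI : I = Ideal.span (Set.range f))
    (hone : (1 : Matrix (Fin n) (Fin n) K) ∈ Vset I)
    (hfg : ∀ i : Fin r, ∀ v w : Matrix (Fin n) (Fin n) K, IsUnit w →
      w.det ^ l i * matEval (v * w⁻¹) (f i) = matEval2 v w (g i)) :
    (∃ G : Subgroup (GL (Fin n) K),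
        (fun x : GL (Fin n) K => (x : Matrix (Fin n) (Fin n) K)) '' ↑G = Vstar I) ↔
      (∀ i : Fin r,
        MvPolynomial.rename (Sum.map (some : Fin n × Fin n → Option (Fin n × Fin n)) some)
          (g i) ∈ (Ihatxy I).radical) := by
  subst hI
  have hg : ∀ v w, IsUnit w →
      (v * w⁻¹ ∈ Vset (Ideal.span (Set.range f)) ↔ ∀ i, matEval2 v w (g i) = 0) := by
    intro v w hw
    rw [mem_Vset_span_iff, Set.forall_mem_range]
    refine forall_congr' fun i => ?_
    have hdet : w.det ^ l i ≠ 0 := pow_ne_zero _ ((Matrix.isUnit_iff_isUnit_det w).mp hw).ne_zero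
    rw [← hfg i v w hw, mul_eq_zero_iff_left hdet]
  refine (exists_subgroup_image_eq_units_iff hone).trans ?_
  simp only [rename_mem_radical_Ihatxy_iff]
  constructor
  · rintro h i v ⟨hv, hvu⟩ w ⟨hw, hwu⟩
    exact (hg v w hwu).mp (h v hv hvu w hw hwu) i
  · intro h v hv hvu w hw hwu
    exact (hg v w hwu).mpr fun i => h i v ⟨hv, hvu⟩ w ⟨hw, hwu⟩

/-- Suppose `1ₙ ∈ V(I)` and for each `i`, `gᵢ ∈ K[x,y]` satisfies
`det(w)^{lᵢ} · fᵢ(v·w⁻¹) = gᵢ(v, w)` for all `v` and all invertible `w`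
(i.e. `gᵢ` is `fᵢ` evaluated at `x·N(y)`, cleared of denominators). Then `V*(I)` is
a subgroup of `GL(n,K)` iff `gᵢ ∈ √(Î_xy)` for every `i`, where `gᵢ` is regarded
as an element of `K[x̂,ŷ]`. -/
theorem stmt13 {n : ℕ} (hn : 1 ≤ n) {K : Type*} [Field K] [IsAlgClosed K]
    (r : ℕ) (f : Fin r → MvPolynomial (Fin n × Fin n) K)
    (g : Fin r → MvPolynomial ((Fin n × Fin n) ⊕ (Fin n × Fin n)) K) (l : Fin r → ℕ)
    (I : Ideal (MvPolynomial (Fin n × Fin n) K)) (hI : I = Ideal.span (Set.range f))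
    (hone : (1 : Matrix (Fin n) (Fin n) K) ∈ Vset I)
    (hfg : ∀ i : Fin r, ∀ v w : Matrix (Fin n) (Fin n) K, IsUnit w →
      w.det ^ l i * matEval (v * w⁻¹) (f i) = matEval2 v w (g i)) :
    (∃ G : Subgroup (GL (Fin n) K),
        (fun x : GL (Fin n) K => (x : Matrix (Fin n) (Fin n) K)) '' ↑G = Vstar I) ↔
      (∀ i : Fin r,
        MvPolynomial.rename (Sum.map (some : Fin n × Fin n → Option (Fin n × Fin n)) some)
          (g i) ∈ (Ihatxy I).radical) :=
  stmt13_general r f g l I hI hone hfg
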